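/- arXiv:1412.3178 — 6 statements merged into one kernel-verified Lean document; each statement's English description precedes it below -/
import Mathlib

section
/- Let ν be a strictly convex norm on ℝⁿ and let C ⊆ ℝⁿ be a nonempty closed set. If x ∉ C and the function x ↦ dist_ν(x, C) is (Fréchet) differentiable at x, then x has a unique best ν-approximation in C. -/
/-- The distance from `x` to the set `C` measured in the norm `ν`. -/
noncomputable def distNu {E : Type*} [AddCommGroup E] (ν : E → ℝ) (C : Set E) (x : E) : ℝ :=
  sInf ((fun y => ν (x - y)) '' C)

/-!
A best approximation exists by compactness, since a definite seminorm on a finite-dimensional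
space dominates a multiple of the norm. For uniqueness let `L` be the derivative of
`d := distNu p C` at `x`. As `d` is `1`-Lipschitz for `p`, `L v ≤ p v` for every `v`; and if
`y` is a best approximation then `d` decreases at unit rate along the segment from `x` to `y`,
so `L (x - y) = d x`. For two best approximations `y₀, y₁` this gives
`p ((x - y₀) + (x - y₁)) ≥ L (x - y₀) + L (x - y₁) = p (x - y₀) + p (x - y₁)`, and strict
convexity forces `x - y₀ = x - y₁`.
-/

open Set Filter Topology

variable {E : Type*} [NormedAddCommGroup E] [NormedSpace ℝ E]

def Seminorm.StrictlyConvex (p : Seminorm ℝ E) : Prop :=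
  ∀ x y, x ≠ y → p x = 1 → p y = 1 → ∀ t : ℝ, 0 < t → t < 1 → p (t • x + (1 - t) • y) < 1

theorem Seminorm.StrictlyConvex.eq_of_map_eq_of_map_add_eq {p : Seminorm ℝ E}
    (hsc : p.StrictlyConvex) (hdef : ∀ v, p v = 0 → v = 0) {u w : E} (h : p u = p w)
    (hadd : p (u + w) = p u + p w) : u = w := by
  by_contra hne
  rcases (apply_nonneg p u).eq_or_lt with hr | hr
  · exact hne ((hdef u hr.symm).trans (hdef w (h ▸ hr.symm)).symm)
  have hunit : ∀ v, p v = p u → p ((p u)⁻¹ • v) = 1 := fun v hv => by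
    rw [map_smul_eq_mul, hv, Real.norm_eq_abs, abs_of_pos (inv_pos.2 hr), inv_mul_cancel₀ hr.ne']
  have hmid := hsc _ _ ((smul_right_injective E (inv_ne_zero hr.ne')).ne hne) (hunit u rfl)
    (hunit w h.symm) (1 / 2) (by norm_num) (by norm_num)
  have hcomb : (1 / 2 : ℝ) • (p u)⁻¹ • u + (1 - 1 / 2 : ℝ) • (p u)⁻¹ • w
      = (2 * p u)⁻¹ • (u + w) := by
    rw [mul_inv]; module
  rw [hcomb, map_smul_eq_mul, hadd, ← h, Real.norm_eq_abs, abs_of_pos (by positivity)] at hmid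
  field_simp at hmid
  linarith

theorem Seminorm.continuous_of_finiteDimensional [FiniteDimensional ℝ E] (p : Seminorm ℝ E) :
    Continuous p :=
  continuousOn_univ.1 (p.convexOn.continuousOn isOpen_univ)

theorem Seminorm.exists_pos_mul_norm_le [FiniteDimensional ℝ E] (p : Seminorm ℝ E)
    (hdef : ∀ v, p v = 0 → v = 0) : ∃ c > 0, ∀ v, c * ‖v‖ ≤ p v := by
  rcases subsingleton_or_nontrivial E with hE | hE
  · exact ⟨1, one_pos, fun v => by simp [Subsingleton.elim v 0]⟩
  obtain ⟨v₀, hv₀, hmin⟩ := (isCompact_sphere (0 : E) 1).exists_isMinOn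
    (NormedSpace.sphere_nonempty.2 zero_le_one) p.continuous_of_finiteDimensional.continuousOn
  rw [mem_sphere_zero_iff_norm] at hv₀
  have hpos : 0 < p v₀ := (apply_nonneg p v₀).lt_of_ne fun h =>
    by simp [hdef v₀ h.symm] at hv₀
  refine ⟨p v₀, hpos, fun v => ?_⟩
  rcases eq_or_ne v 0 with rfl | hv
  · simp
  have hnv : 0 < ‖v‖ := norm_pos_iff.2 hv
  have : p v₀ ≤ p (‖v‖⁻¹ • v) := hmin (show ‖v‖⁻¹ • v ∈ Metric.sphere (0 : E) 1 by
    simp [norm_smul, inv_mul_cancel₀ hnv.ne'])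
  rw [map_smul_eq_mul, norm_inv, norm_norm] at this
  rwa [le_inv_mul_iff₀ hnv, mul_comm] at this

section Distance

variable {p : Seminorm ℝ E} {C : Set E}

theorem distNu_le_of_mem {y : E} (hy : y ∈ C) (x : E) : distNu p C x ≤ p (x - y) :=
  csInf_le ⟨0, forall_mem_image.2 fun _ _ => apply_nonneg p _⟩ (mem_image_of_mem _ hy)

theorem distNu_le_distNu_add (hC : C.Nonempty) (a b : E) :
    distNu p C a ≤ distNu p C b + p (a - b) := by
  suffices distNu p C a - p (a - b) ≤ distNu p C b by linarith
  refine le_csInf (hC.image _) (forall_mem_image.2 fun y hy => ?_)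
  have := map_add_le_add p (a - b) (b - y)
  rw [sub_add_sub_cancel] at this
  linarith [distNu_le_of_mem (p := p) hy a]

theorem exists_map_sub_eq_distNu [FiniteDimensional ℝ E] (hdef : ∀ v, p v = 0 → v = 0)
    (hC : IsClosed C) (hne : C.Nonempty) (x : E) : ∃ y ∈ C, p (x - y) = distNu p C x := by
  obtain ⟨c, hc, hcp⟩ := p.exists_pos_mul_norm_le hdef
  obtain ⟨y₀, hy₀⟩ := hne
  have hcont : Continuous fun y => p (x - y) :=
    p.continuous_of_finiteDimensional.comp (continuous_const.sub continuous_id)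
  have hcoercive : Tendsto (fun y => p (x - y)) (cocompact E) atTop :=
    tendsto_atTop_mono (fun y => hcp (x - y)) <| Tendsto.const_mul_atTop hc <|
      tendsto_norm_cocompact_atTop.comp (Homeomorph.subLeft x).isClosedEmbedding.tendsto_cocompact
  obtain ⟨y, hyC, hmin⟩ := hcont.continuousOn.exists_isMinOn' hC hy₀
    ((hcoercive.eventually_ge_atTop _).filter_mono inf_le_left)
  have hleast : IsLeast ((fun y => p (x - y)) '' C) (p (x - y)) :=
    ⟨mem_image_of_mem _ hyC, forall_mem_image.2 fun z hz => hmin hz⟩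
  exact ⟨y, hyC, hleast.csInf_eq.symm⟩

end Distance

theorem HasFDerivAt.le_of_eventually_le {f : E → ℝ} {L : E →L[ℝ] ℝ} {x v : E} {c : ℝ}
    (hf : HasFDerivAt f L x) (h : ∀ᶠ t in 𝓝[>] (0 : ℝ), f (x + t • v) ≤ f x + t * c) :
    L v ≤ c := by
  have hline : HasDerivAt (fun t : ℝ => f (x + t • v)) (L v) 0 := by
    refine (by simpa using hf : HasFDerivAt f L (x + (0 : ℝ) • v)).comp_hasDerivAt 0 ?_
    simpa using ((hasDerivAt_id (0 : ℝ)).smul_const v).const_add x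
  refine le_of_tendsto ((hasDerivAt_iff_tendsto_slope.1 hline).mono_left
    (nhdsWithin_mono 0 fun t (ht : t ∈ Ioi 0) => ht.ne')) ?_
  filter_upwards [h, self_mem_nhdsWithin] with t ht htpos
  rw [slope_def_field, div_le_iff₀ (by simpa using htpos)]
  simp only [zero_smul, add_zero, sub_zero] at ht ⊢
  linarith

section Derivative

variable {p : Seminorm ℝ E} {C : Set E} {x : E} {L : E →L[ℝ] ℝ}

theorem apply_le_of_hasFDerivAt_distNu (hC : C.Nonempty) (hd : HasFDerivAt (distNu p C) L x)
    (v : E) : L v ≤ p v := by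
  refine hd.le_of_eventually_le (eventually_mem_nhdsWithin.mono fun t (ht : 0 < t) => ?_)
  have := distNu_le_distNu_add (p := p) hC (x + t • v) x
  rwa [add_sub_cancel_left, map_smul_eq_mul, Real.norm_eq_abs, abs_of_pos ht] at this

theorem distNu_le_apply_sub_of_hasFDerivAt {y : E} (hy : y ∈ C)
    (hbest : p (x - y) = distNu p C x) (hd : HasFDerivAt (distNu p C) L x) :
    distNu p C x ≤ L (x - y) := by
  suffices L (y - x) ≤ -distNu p C x by
    rw [← neg_sub, map_neg]; linarith
  refine hd.le_of_eventually_le ?_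
  filter_upwards [Ioc_mem_nhdsGT one_pos] with t ht
  have := distNu_le_of_mem (p := p) hy (x + t • (y - x))
  rw [show x + t • (y - x) - y = (1 - t) • (x - y) by module, map_smul_eq_mul,
    Real.norm_eq_abs, abs_of_nonneg (sub_nonneg.2 ht.2), hbest] at this
  linarith [show (1 - t) * distNu p C x = distNu p C x + t * -distNu p C x by ring]

theorem subsingleton_best_of_differentiableAt (hsc : p.StrictlyConvex)
    (hdef : ∀ v, p v = 0 → v = 0) (hC : C.Nonempty) (hd : DifferentiableAt ℝ (distNu p C) x) :
    {y | y ∈ C ∧ p (x - y) = distNu p C x}.Subsingleton := by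
  rintro y₀ ⟨hy₀, hbest₀⟩ y₁ ⟨hy₁, hbest₁⟩
  have hL := hd.hasFDerivAt
  have hsum : p (x - y₀) + p (x - y₁) ≤ p ((x - y₀) + (x - y₁)) := by
    have := apply_le_of_hasFDerivAt_distNu hC hL ((x - y₀) + (x - y₁))
    linarith [map_add (fderiv ℝ (distNu p C) x) (x - y₀) (x - y₁),
      distNu_le_apply_sub_of_hasFDerivAt hy₀ hbest₀ hL,
      distNu_le_apply_sub_of_hasFDerivAt hy₁ hbest₁ hL]
  exact sub_right_injective (hsc.eq_of_map_eq_of_map_add_eq hdef (hbest₀.trans hbest₁.symm)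
    (le_antisymm (map_add_le_add p _ _) hsum))

end Derivative

theorem stmt0_general {n : ℕ} (ν : EuclideanSpace ℝ (Fin n) → ℝ)
    (hν_eq : ∀ x, ν x = 0 ↔ x = 0)
    (hν_smul : ∀ (c : ℝ) (x), ν (c • x) = |c| * ν x)
    (hν_add : ∀ x y, ν (x + y) ≤ ν x + ν y)
    (hν_sc : ∀ x y, x ≠ y → ν x = 1 → ν y = 1 →
      ∀ t : ℝ, 0 < t → t < 1 → ν (t • x + (1 - t) • y) < 1)
    (C : Set (EuclideanSpace ℝ (Fin n))) (hCne : C.Nonempty) (hCcl : IsClosed C)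
    (x : EuclideanSpace ℝ (Fin n))
    (hdiff : DifferentiableAt ℝ (distNu ν C) x) :
    ∃! y, y ∈ C ∧ ν (x - y) = distNu ν C x := by
  let p : Seminorm ℝ (EuclideanSpace ℝ (Fin n)) :=
    Seminorm.of ν hν_add fun c v => by rw [hν_smul, Real.norm_eq_abs]
  have hdef : ∀ v, p v = 0 → v = 0 := fun v => (hν_eq v).1
  obtain ⟨y, hyC, hy⟩ := exists_map_sub_eq_distNu hdef hCcl hCne x
  exact ⟨y, ⟨hyC, hy⟩, fun z hz =>
    subsingleton_best_of_differentiableAt (p := p) hν_sc hdef hCne hdiff hz ⟨hyC, hy⟩⟩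

/-- If `ν` is a strictly convex norm on `ℝⁿ`, `C` a nonempty closed set, `x ∉ C`, and
`distNu ν C` is Fréchet differentiable at `x`, then `x` has a unique best `ν`-approximation
in `C`. -/
theorem stmt0 {n : ℕ} (ν : EuclideanSpace ℝ (Fin n) → ℝ)
    (hν_eq : ∀ x, ν x = 0 ↔ x = 0)
    (hν_smul : ∀ (c : ℝ) (x), ν (c • x) = |c| * ν x)
    (hν_add : ∀ x y, ν (x + y) ≤ ν x + ν y)
    (hν_sc : ∀ x y, x ≠ y → ν x = 1 → ν y = 1 →
      ∀ t : ℝ, 0 < t → t < 1 → ν (t • x + (1 - t) • y) < 1)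
    (C : Set (EuclideanSpace ℝ (Fin n))) (hCne : C.Nonempty) (hCcl : IsClosed C)
    (x : EuclideanSpace ℝ (Fin n)) (hx : x ∉ C)
    (hdiff : DifferentiableAt ℝ (distNu ν C) x) :
    ∃! y, y ∈ C ∧ ν (x - y) = distNu ν C x :=
  stmt0_general ν hν_eq hν_smul hν_add hν_sc C hCne hCcl x hdiff
end

section
/- Let ν be a norm on ℝⁿ that is (Fréchet) differentiable at every x ≠ 0. Then the map ∇ν² : ℝⁿ → ℝⁿ, defined as the gradient of x ↦ ν(x)² at x ≠ 0 and as 0 at x = 0, is surjective: every w ∈ ℝⁿ equals ∇ν²(x) for some x ∈ ℝⁿ. -/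
open scoped Classical
open scoped RealInnerProductSpace
open Filter

/-!
For `w ≠ 0`, minimise `g y = ν y ^ 2 - ⟪w, y⟫`. Since `ν` is a norm on a finite-dimensional space it
dominates a multiple of the Euclidean norm, so `g` is coercive and attains its minimum at some `x₀`.
Along the ray through `w`, `g (t • w) = t ^ 2 ν(w) ^ 2 - t ‖w‖ ^ 2 < 0 = g 0` for small `t > 0`, so
`x₀ ≠ 0`; there `ν ^ 2` is differentiable and the first-order condition reads `∇ν²(x₀) = w`.
-/

section FirstOrder

variable {E : Type*} [NormedAddCommGroup E] [InnerProductSpace ℝ E] [CompleteSpace E]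

theorem IsLocalMin.hasGradientAt_of_sub_inner {f : E → ℝ} {w x : E}
    (hmin : IsLocalMin (fun y => f y - ⟪w, y⟫) x) (hf : DifferentiableAt ℝ f x) :
    HasGradientAt f w x := by
  have hderiv := hf.hasFDerivAt.sub (innerSL ℝ w).hasFDerivAt
  have hcrit : fderiv ℝ f x = innerSL ℝ w := sub_eq_zero.1 (hmin.hasFDerivAt_eq_zero hderiv)
  have hdual : (InnerProductSpace.toDual ℝ E w : E →L[ℝ] ℝ) = fderiv ℝ f x := by rw [hcrit]; rfl
  rw [hasGradientAt_iff_hasFDerivAt, hdual]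
  exact hf.hasFDerivAt

end FirstOrder

namespace Seminorm

section FiniteDimensional

variable {E : Type*} [NormedAddCommGroup E] [NormedSpace ℝ E] [FiniteDimensional ℝ E]

theorem continuous_of_finiteDimensional_s2 (p : Seminorm ℝ E) : Continuous p :=
  p.convexOn.locallyLipschitz.continuous

theorem exists_pos_mul_norm_le_s2 (p : Seminorm ℝ E) (hp : ∀ x, p x = 0 → x = 0) :
    ∃ c > 0, ∀ x, c * ‖x‖ ≤ p x := by
  rcases subsingleton_or_nontrivial E with _ | _
  · exact ⟨1, one_pos, fun x => by simp [Subsingleton.elim x 0]⟩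
  obtain ⟨x₁, hx₁, hmin⟩ := (isCompact_sphere (0 : E) 1).exists_isMinOn
    (NormedSpace.sphere_nonempty.2 zero_le_one) p.continuous_of_finiteDimensional_s2.continuousOn
  have hx₁0 : x₁ ≠ 0 := ne_zero_of_mem_unit_sphere ⟨x₁, hx₁⟩
  refine ⟨p x₁, (apply_nonneg p x₁).lt_of_ne' (mt (hp x₁) hx₁0), fun x => ?_⟩
  rcases eq_or_ne x 0 with rfl | hx
  · simp
  have hxpos : 0 < ‖x‖ := norm_pos_iff.2 hx
  have hmem : ‖x‖⁻¹ • x ∈ Metric.sphere (0 : E) 1 := by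
    rw [mem_sphere_zero_iff_norm, norm_smul, norm_inv, norm_norm, inv_mul_cancel₀ hxpos.ne']
  have hle : p x₁ ≤ ‖x‖⁻¹ * p x := by
    simpa [map_smul_eq_mul, norm_inv, norm_norm] using hmin hmem
  rwa [le_inv_mul_iff₀ hxpos, mul_comm] at hle

end FiniteDimensional

section InnerProduct

variable {E : Type*} [NormedAddCommGroup E] [InnerProductSpace ℝ E]

theorem exists_sq_sub_inner_neg (p : Seminorm ℝ E) (hp : ∀ x, p x = 0 → x = 0) {w : E}
    (hw : w ≠ 0) : ∃ y, p y ^ 2 - ⟪w, y⟫ < 0 := by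
  have hpw : 0 < p w := (apply_nonneg p w).lt_of_ne' (mt (hp w) hw)
  have hwpos : 0 < ‖w‖ := norm_pos_iff.2 hw
  set t := ‖w‖ ^ 2 / (2 * p w ^ 2)
  have ht : 0 < t := by positivity
  have htp : t * p w ^ 2 = ‖w‖ ^ 2 / 2 := by simp only [t]; field_simp
  refine ⟨t • w, ?_⟩
  rw [map_smul_eq_mul, Real.norm_of_nonneg ht.le, real_inner_smul_right,
    real_inner_self_eq_norm_sq]
  nlinarith [mul_pos ht hwpos]

variable [FiniteDimensional ℝ E]

theorem tendsto_sq_sub_inner_cocompact (p : Seminorm ℝ E) (hp : ∀ x, p x = 0 → x = 0) (w : E) :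
    Tendsto (fun y => p y ^ 2 - ⟪w, y⟫) (cocompact E) atTop := by
  obtain ⟨c, hc, hcp⟩ := p.exists_pos_mul_norm_le_s2 hp
  have hquad : Tendsto (fun r : ℝ => r * (c ^ 2 * r - ‖w‖)) atTop atTop :=
    tendsto_id.atTop_mul_atTop₀
      (tendsto_atTop_add_const_right _ _ (tendsto_id.const_mul_atTop (by positivity)))
  refine tendsto_atTop_mono (fun y => ?_) (hquad.comp (tendsto_norm_cocompact_atTop))
  have hinner : ⟪w, y⟫ ≤ ‖w‖ * ‖y‖ := real_inner_le_norm w y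
  have hsq : (c * ‖y‖) ^ 2 ≤ p y ^ 2 := pow_le_pow_left₀ (by positivity) (hcp y) 2
  simp only [Function.comp_apply]
  nlinarith

end InnerProduct

end Seminorm

/-- If `ν` is a norm on `ℝⁿ` differentiable at every `x ≠ 0`, then the map
`∇ν² : ℝⁿ → ℝⁿ` (the gradient of `x ↦ ν(x)²` at `x ≠ 0`, and `0` at `x = 0`)
is surjective. -/
theorem stmt2 {n : ℕ} (ν : EuclideanSpace ℝ (Fin n) → ℝ)
    (hν_eq : ∀ x, ν x = 0 ↔ x = 0)
    (hν_smul : ∀ (c : ℝ) (x), ν (c • x) = |c| * ν x)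
    (hν_add : ∀ x y, ν (x + y) ≤ ν x + ν y)
    (hν_diff : ∀ x : EuclideanSpace ℝ (Fin n), x ≠ 0 → DifferentiableAt ℝ ν x) :
    Function.Surjective
      (fun x : EuclideanSpace ℝ (Fin n) =>
        if x = 0 then (0 : EuclideanSpace ℝ (Fin n))
        else gradient (fun y => ν y ^ 2) x) := by
  intro w
  rcases eq_or_ne w 0 with rfl | hw
  · exact ⟨0, if_pos rfl⟩
  let p : Seminorm ℝ (EuclideanSpace ℝ (Fin n)) := Seminorm.of ν hν_add hν_smul
  have hp : ∀ x, p x = 0 → x = 0 := fun x => (hν_eq x).1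
  obtain ⟨x₀, hx₀⟩ := (p.continuous_of_finiteDimensional_s2.pow 2 |>.sub
    (continuous_const.inner continuous_id)).exists_forall_le (p.tendsto_sq_sub_inner_cocompact hp w)
  have hx₀0 : x₀ ≠ 0 := by
    rintro rfl
    obtain ⟨y, hy⟩ := p.exists_sq_sub_inner_neg hp hw
    simpa using (hx₀ y).trans_lt hy
  have hgrad : HasGradientAt (fun y => ν y ^ 2) w x₀ :=
    IsLocalMin.hasGradientAt_of_sub_inner (Eventually.of_forall hx₀) ((hν_diff x₀ hx₀0).pow 2)
  exact ⟨x₀, (if_neg hx₀0).trans hgrad.gradient⟩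
end

section
/- Let ν be a norm on ℝⁿ that is (Fréchet) differentiable at every x ≠ 0 and is also strictly convex. Then the map ∇ν² : ℝⁿ → ℝⁿ, defined as the gradient of x ↦ ν(x)² at x ≠ 0 and as 0 at x = 0, is injective (and hence, combined with surjectivity, a bijection of ℝⁿ onto itself). -/
/-!
`F = ν²` is strictly convex: along a sphere `ν = r` by the strict convexity of `ν`, across
spheres of different radii by that of `t ↦ t²`. So `F` lies strictly above its tangent
hyperplanes, `⟪∇F x, y - x⟫ < F y - F x` for `x ≠ y`, and at `x = 0` the same holds with `0` in
place of `∇F 0` because `F > 0` off the origin. Adding this inequality for `(x, y)` and `(y, x)`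
shows that distinct points cannot share a gradient.
-/

open Set Function
open scoped RealInnerProductSpace

theorem StrictConvexOn.comp_affineMap {𝕜 E F β : Type*} [Field 𝕜] [LinearOrder 𝕜]
    [AddCommGroup E] [AddCommGroup F] [AddCommMonoid β] [PartialOrder β]
    [Module 𝕜 E] [Module 𝕜 F] [SMul 𝕜 β] {f : F → β} {g : E →ᵃ[𝕜] F} (hg : Injective g)
    {s : Set F} (hf : StrictConvexOn 𝕜 s f) :
    StrictConvexOn 𝕜 (g ⁻¹' s) (f ∘ g) :=
  ⟨hf.1.affine_preimage _, fun x hx y hy hxy a b ha hb hab =>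
    calc
      (f ∘ g) (a • x + b • y) = f (a • g x + b • g y) := by
        rw [comp_apply, Convex.combo_affine_apply hab]
      _ < a • f (g x) + b • f (g y) := hf.2 hx hy (hg.ne hxy) ha hb hab⟩

theorem StrictConvexOn.fderiv_apply_sub_lt {E : Type*} [NormedAddCommGroup E] [NormedSpace ℝ E]
    {F : E → ℝ} {s : Set E} (hF : StrictConvexOn ℝ s F) {x y : E} (hx : x ∈ s) (hy : y ∈ s)
    (hxy : x ≠ y) (hd : DifferentiableAt ℝ F x) :
    fderiv ℝ F x (y - x) < F y - F x := by
  let ℓ : ℝ →ᵃ[ℝ] E := AffineMap.lineMap x y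
  have hline : StrictConvexOn ℝ (ℓ ⁻¹' s) (F ∘ ℓ) :=
    hF.comp_affineMap (AffineMap.lineMap_injective ℝ hxy)
  have hderiv : HasDerivAt (F ∘ ℓ) (fderiv ℝ F x (y - x)) 0 := by
    have hF' : HasFDerivAt F (fderiv ℝ F x) (ℓ 0) := by
      simpa [ℓ] using hd.hasFDerivAt
    exact hF'.comp_hasDerivAt 0 AffineMap.hasDerivAt_lineMap
  simpa [slope, ℓ] using
    hline.lt_slope_of_hasDerivAt (by simpa [ℓ] using hx) (by simpa [ℓ] using hy) zero_lt_one hderiv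

theorem StrictConvexOn.inner_gradient_sub_lt {E : Type*} [NormedAddCommGroup E]
    [InnerProductSpace ℝ E] [CompleteSpace E] {F : E → ℝ} {s : Set E}
    (hF : StrictConvexOn ℝ s F) {x y : E} (hx : x ∈ s) (hy : y ∈ s) (hxy : x ≠ y)
    (hd : DifferentiableAt ℝ F x) :
    ⟪gradient F x, y - x⟫ < F y - F x := by
  rw [← InnerProductSpace.toDual_apply_apply, toDual_gradient]
  exact hF.fderiv_apply_sub_lt hx hy hxy hd

theorem injective_of_inner_sub_lt {E : Type*} [NormedAddCommGroup E] [InnerProductSpace ℝ E]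
    {G : E → E} {F : E → ℝ} (h : ∀ x y, x ≠ y → ⟪G x, y - x⟫ < F y - F x) :
    Injective G := by
  intro x y hG
  by_contra hxy
  have hxy' := h x y hxy
  have hyx := h y x (Ne.symm hxy)
  have hanti : ⟪G y, x - y⟫ = -⟪G y, y - x⟫ := by rw [← inner_neg_right, neg_sub]
  rw [hG] at hxy'
  linarith

namespace Seminorm

variable {E : Type*} [AddCommGroup E] [Module ℝ E] (p : Seminorm ℝ E)
  (hp : ∀ x, p x = 0 → x = 0)
  (hsc : ∀ x y, x ≠ y → p x = 1 → p y = 1 → ∀ t : ℝ, 0 < t → t < 1 → p (t • x + (1 - t) • y) < 1)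
include hp hsc

theorem apply_combo_lt_of_apply_eq {x y : E} (hxy : x ≠ y) (hpxy : p x = p y) {a b : ℝ}
    (ha : 0 < a) (hb : 0 < b) (hab : a + b = 1) :
    p (a • x + b • y) < p x := by
  set r := p x
  have hr : 0 < r := by
    refine (apply_nonneg p x).lt_of_ne fun hr0 => hxy ?_
    rw [hp x hr0.symm, hp y (hpxy ▸ hr0.symm)]
  have hunit : ∀ z, p z = r → p (r⁻¹ • z) = 1 := fun z hz => by
    rw [map_smul_eq_mul, Real.norm_eq_abs, abs_of_pos (inv_pos.mpr hr), hz, inv_mul_cancel₀ hr.ne']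
  have hcombo : a • x + b • y = r • (a • (r⁻¹ • x) + (1 - a) • (r⁻¹ • y)) := by
    rw [← hab, add_sub_cancel_left, smul_add, smul_comm r a, smul_comm r b,
      smul_inv_smul₀ hr.ne', smul_inv_smul₀ hr.ne']
  have hlt := hsc _ _ ((smul_right_injective E (inv_ne_zero hr.ne')).ne hxy) (hunit x rfl)
    (hunit y hpxy.symm) a ha (by linarith)
  rw [hcombo, map_smul_eq_mul, Real.norm_eq_abs, abs_of_pos hr]
  exact mul_lt_of_lt_one_right hr hlt

theorem strictConvexOn_sq : StrictConvexOn ℝ univ fun x => p x ^ 2 := by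
  refine ⟨convex_univ, fun x _ y _ hxy a b ha hb hab => ?_⟩
  by_cases hpxy : p x = p y
  · calc p (a • x + b • y) ^ 2 < p x ^ 2 :=
          pow_lt_pow_left₀ (p.apply_combo_lt_of_apply_eq hp hsc hxy hpxy ha hb hab)
            (apply_nonneg _ _) two_ne_zero
      _ = a • p x ^ 2 + b • p y ^ 2 := by
          rw [← hpxy, smul_eq_mul, smul_eq_mul, ← add_mul, hab, one_mul]
  · have hconv : p (a • x + b • y) ≤ a * p x + b * p y := by
      simpa using p.convexOn.2 (mem_univ x) (mem_univ y) ha.le hb.le hab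
    calc p (a • x + b • y) ^ 2 ≤ (a * p x + b * p y) ^ 2 :=
          pow_le_pow_left₀ (apply_nonneg _ _) hconv 2
      _ < a • p x ^ 2 + b • p y ^ 2 := by
          simpa using (Even.strictConvexOn_pow even_two two_ne_zero).2 (mem_univ (p x))
            (mem_univ (p y)) hpxy ha hb hab

end Seminorm

/-- If `ν` is a strictly convex norm on `ℝⁿ` differentiable at every `x ≠ 0`, then the map
`∇ν² : ℝⁿ → ℝⁿ` (the gradient of `x ↦ ν(x)²` at `x ≠ 0`, and `0` at `x = 0`)
is injective (and hence, combined with surjectivity, a bijection of `ℝⁿ` onto itself). -/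
theorem stmt3 {n : ℕ} (ν : EuclideanSpace ℝ (Fin n) → ℝ)
    (hν_eq : ∀ x, ν x = 0 ↔ x = 0)
    (hν_smul : ∀ (c : ℝ) (x), ν (c • x) = |c| * ν x)
    (hν_add : ∀ x y, ν (x + y) ≤ ν x + ν y)
    (hν_diff : ∀ x : EuclideanSpace ℝ (Fin n), x ≠ 0 → DifferentiableAt ℝ ν x)
    (hν_sc : ∀ x y, x ≠ y → ν x = 1 → ν y = 1 →
      ∀ t : ℝ, 0 < t → t < 1 → ν (t • x + (1 - t) • y) < 1) :
    Function.Injective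
      (fun x : EuclideanSpace ℝ (Fin n) =>
        if x = 0 then (0 : EuclideanSpace ℝ (Fin n))
        else gradient (fun y => ν y ^ 2) x) := by
  let p : Seminorm ℝ (EuclideanSpace ℝ (Fin n)) :=
    Seminorm.of ν hν_add fun c x => by rw [hν_smul, Real.norm_eq_abs]
  have hF : StrictConvexOn ℝ univ fun y => ν y ^ 2 :=
    p.strictConvexOn_sq (fun x => (hν_eq x).1) hν_sc
  refine injective_of_inner_sub_lt (F := fun y => ν y ^ 2) fun x y hxy => ?_
  split_ifs with hx
  · subst hx
    have hy : ν y ≠ 0 := fun h => hxy ((hν_eq y).1 h).symm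
    simpa [(hν_eq 0).2 rfl] using (by positivity : 0 < ν y ^ 2)
  · exact hF.inner_gradient_sub_lt (mem_univ x) (mem_univ y) hxy ((hν_diff x hx).pow 2)
end

section
/- Let ν be a norm on ℝⁿ that is (Fréchet) differentiable at every x ≠ 0. Then the function ν² : ℝⁿ → ℝ, x ↦ ν(x)², is continuously differentiable on all of ℝⁿ; its gradient at 0 is 0, and its gradient at x ≠ 0 equals 2ν(x)∇ν(x), where ∇ν(x) denotes the gradient of ν at x. -/
/-!
A seminorm `p` is convex, so wherever it is differentiable its derivative is a subgradient:
`fderiv p x y ≤ p (x + y) - p x`. Hence `‖fderiv p x‖ ≤ C` whenever `p ≤ C ‖·‖`, which makes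
`(2 p x) • fderiv p x` tend to `0` at `0` and gives `p² = O(‖x‖²) = o(‖x‖)` there. Away from `0`,
the subgradient inequality squeezes `fderiv p x y` between difference quotients
`(p (x + t y) - p x) / t` of both signs of `t`, which are continuous in `x`; in finite dimension,
continuity of every directional derivative is continuity of the derivative.
-/

open Set Filter Topology

variable {E : Type*} [NormedAddCommGroup E] [NormedSpace ℝ E] {f : E → ℝ} {x y : E}

theorem DifferentiableAt.hasDerivAt_comp_add_smul (hx : DifferentiableAt ℝ f x) (y : E) :
    HasDerivAt (fun t : ℝ => f (x + t • y)) (fderiv ℝ f x y) 0 := by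
  have hline : HasDerivAt (fun t : ℝ => x + t • y) y 0 :=
    ((hasDerivAt_id 0).smul_const y).const_add x |>.congr_deriv (one_smul ℝ y)
  have hfx : HasFDerivAt f (fderiv ℝ f x) (x + (0 : ℝ) • y) := by simpa using hx.hasFDerivAt
  exact hfx.comp_hasDerivAt 0 hline

theorem ConvexOn.fderiv_apply_le_sub (hf : ConvexOn ℝ univ f) (hx : DifferentiableAt ℝ f x)
    (y : E) : fderiv ℝ f x y ≤ f (x + y) - f x := by
  have hline : ConvexOn ℝ univ (fun t : ℝ => f (x + t • y)) := by
    have hmap : (fun t : ℝ => f (x + t • y)) = f ∘ AffineMap.lineMap x (x + y) := by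
      ext t
      simp [AffineMap.lineMap_apply, add_comm]
    simpa [hmap] using hf.comp_affineMap (AffineMap.lineMap x (x + y))
  simpa [slope_def_field] using
    hline.le_slope_of_hasDerivAt (mem_univ 0) (mem_univ 1) one_pos (hx.hasDerivAt_comp_add_smul y)

theorem ConvexOn.continuous [FiniteDimensional ℝ E] (hf : ConvexOn ℝ univ f) : Continuous f :=
  continuousOn_univ.1 (hf.continuousOn isOpen_univ)

variable {x₀ : E}

theorem ConvexOn.eventually_fderiv_apply_lt (hf : ConvexOn ℝ univ f) (hcont : Continuous f)
    (hdiff : ∀ᶠ x in 𝓝 x₀, DifferentiableAt ℝ f x) {b : ℝ} (hb : fderiv ℝ f x₀ y < b) :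
    ∀ᶠ x in 𝓝 x₀, fderiv ℝ f x y < b := by
  obtain ⟨t, hslope, ht⟩ : ∃ t : ℝ, (f (x₀ + t • y) - f x₀) / t < b ∧ 0 < t := by
    have hd := hdiff.self_of_nhds.hasDerivAt_comp_add_smul y
    have := (hasDerivAt_iff_tendsto_slope.1 hd).mono_left (nhdsGT_le_nhdsNE 0)
    simpa [slope_def_field] using ((this.eventually_lt_const hb).and self_mem_nhdsWithin).exists
  have hquot : ContinuousAt (fun x => (f (x + t • y) - f x) / t) x₀ := by fun_prop
  filter_upwards [hdiff, hquot.eventually_lt_const hslope] with x hx hlt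
  calc fderiv ℝ f x y = fderiv ℝ f x (t • y) / t := by rw [map_smul, smul_eq_mul]; field_simp
    _ ≤ (f (x + t • y) - f x) / t := by gcongr; exact hf.fderiv_apply_le_sub hx _
    _ < b := hlt

theorem ConvexOn.continuousAt_fderiv [FiniteDimensional ℝ E] (hf : ConvexOn ℝ univ f)
    (hdiff : ∀ᶠ x in 𝓝 x₀, DifferentiableAt ℝ f x) : ContinuousAt (fderiv ℝ f) x₀ := by
  refine continuousAt_clm_apply.2 fun y => tendsto_order.2
    ⟨fun a ha => ?_, fun b hb => hf.eventually_fderiv_apply_lt hf.continuous hdiff hb⟩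
  have hneg : fderiv ℝ f x₀ (-y) < -a := by rw [map_neg]; linarith
  filter_upwards [hf.eventually_fderiv_apply_lt hf.continuous hdiff hneg] with x hx
  rw [map_neg] at hx
  linarith

namespace Seminorm

variable (p : Seminorm ℝ E)

theorem fderiv_apply_le (hx : DifferentiableAt ℝ p x) (y : E) : fderiv ℝ p x y ≤ p y := by
  linarith [p.convexOn.fderiv_apply_le_sub hx y, map_add_le_add p x y]

theorem norm_fderiv_le {C : ℝ} (hC : 0 ≤ C) (hp : ∀ y, p y ≤ C * ‖y‖) (x : E) :
    ‖fderiv ℝ p x‖ ≤ C := by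
  by_cases hx : DifferentiableAt ℝ p x
  · refine ContinuousLinearMap.opNorm_le_bound _ hC fun y => abs_le.2 ⟨?_, ?_⟩
    · have := p.fderiv_apply_le hx (-y)
      rw [map_neg, map_neg_eq_map] at this
      linarith [hp y]
    · exact (p.fderiv_apply_le hx y).trans (hp y)
  · simpa [fderiv_zero_of_not_differentiableAt hx] using hC

theorem hasFDerivAt_sq_zero (hp : Continuous p) :
    HasFDerivAt (fun x => p x ^ 2) (0 : E →L[ℝ] ℝ) 0 := by
  obtain ⟨C, -, hC⟩ := p.bound_of_continuous_normedSpace hp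
  have hbig : (fun h : E => p h ^ 2) =O[𝓝 0] fun h => ‖h‖ ^ 2 := by
    refine Asymptotics.IsBigO.of_bound (C ^ 2) (Eventually.of_forall fun h => ?_)
    rw [Real.norm_of_nonneg (by positivity), Real.norm_of_nonneg (by positivity), ← mul_pow]
    exact pow_le_pow_left₀ (apply_nonneg p h) (hC h) 2
  rw [hasFDerivAt_iff_isLittleO_nhds_zero]
  simpa using hbig.trans_isLittleO (Asymptotics.isLittleO_norm_pow_id one_lt_two)

theorem hasFDerivAt_sq (hp : Continuous p) (hdiff : ∀ x ≠ 0, DifferentiableAt ℝ p x) (x : E) :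
    HasFDerivAt (fun y => p y ^ 2) ((2 * p x) • fderiv ℝ p x) x := by
  rcases eq_or_ne x 0 with rfl | hx
  · simpa using p.hasFDerivAt_sq_zero hp
  · simpa using (hdiff x hx).hasFDerivAt.pow 2

theorem contDiff_sq [FiniteDimensional ℝ E] (hdiff : ∀ x ≠ 0, DifferentiableAt ℝ p x) :
    ContDiff ℝ 1 (fun x => p x ^ 2) := by
  have hp : Continuous p := p.convexOn.continuous
  have hD := p.hasFDerivAt_sq hp hdiff
  rw [contDiff_one_iff_fderiv, funext fun x => (hD x).fderiv]
  refine ⟨fun x => (hD x).differentiableAt, continuous_iff_continuousAt.2 fun x₀ => ?_⟩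
  rcases eq_or_ne x₀ 0 with rfl | hx₀
  · obtain ⟨C, hC0, hC⟩ := p.bound_of_continuous_normedSpace hp
    have hlim : Tendsto (fun x => 2 * p x) (𝓝 0) (𝓝 0) := by
      simpa using (hp.tendsto 0).const_mul 2
    simpa [ContinuousAt] using hlim.zero_smul_isBoundedUnder_le
      ⟨C, eventually_map.2 (Eventually.of_forall (p.norm_fderiv_le hC0.le hC))⟩
  · exact (continuousAt_const.mul hp.continuousAt).smul
      (p.convexOn.continuousAt_fderiv ((eventually_ne_nhds hx₀).mono hdiff))

end Seminorm

theorem stmt4_general {n : ℕ} (ν : EuclideanSpace ℝ (Fin n) → ℝ)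
    (hν_smul : ∀ (c : ℝ) (x), ν (c • x) = |c| * ν x)
    (hν_add : ∀ x y, ν (x + y) ≤ ν x + ν y)
    (hν_diff : ∀ x : EuclideanSpace ℝ (Fin n), x ≠ 0 → DifferentiableAt ℝ ν x) :
    ContDiff ℝ 1 (fun x => ν x ^ 2) ∧
    gradient (fun x => ν x ^ 2) 0 = 0 ∧
    ∀ x : EuclideanSpace ℝ (Fin n), x ≠ 0 →
      gradient (fun y => ν y ^ 2) x = (2 * ν x) • gradient ν x := by
  let p : Seminorm ℝ (EuclideanSpace ℝ (Fin n)) := Seminorm.of ν hν_add hν_smul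
  have hD : ∀ x, HasFDerivAt (fun y => ν y ^ 2) ((2 * ν x) • fderiv ℝ ν x) x :=
    p.hasFDerivAt_sq p.convexOn.continuous hν_diff
  refine ⟨p.contDiff_sq hν_diff, ?_, fun x _ => ?_⟩
  · simp [gradient, (hD 0).fderiv, show ν 0 = 0 from map_zero p]
  · simp [gradient, (hD x).fderiv]

/-- If `ν` is a norm on `ℝⁿ` differentiable at every `x ≠ 0`, then `x ↦ ν(x)²` is
continuously differentiable on all of `ℝⁿ`, its gradient at `0` is `0`, and its gradient
at `x ≠ 0` equals `2ν(x)∇ν(x)`. -/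
theorem stmt4 {n : ℕ} (ν : EuclideanSpace ℝ (Fin n) → ℝ)
    (hν_eq : ∀ x, ν x = 0 ↔ x = 0)
    (hν_smul : ∀ (c : ℝ) (x), ν (c • x) = |c| * ν x)
    (hν_add : ∀ x y, ν (x + y) ≤ ν x + ν y)
    (hν_diff : ∀ x : EuclideanSpace ℝ (Fin n), x ≠ 0 → DifferentiableAt ℝ ν x) :
    ContDiff ℝ 1 (fun x => ν x ^ 2) ∧
    gradient (fun x => ν x ^ 2) 0 = 0 ∧
    ∀ x : EuclideanSpace ℝ (Fin n), x ≠ 0 →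
      gradient (fun y => ν y ^ 2) x = (2 * ν x) • gradient ν x :=
  stmt4_general ν hν_smul hν_add hν_diff
end

section
/- Let C := {(t, t) : t ∈ ℝ} ⊆ ℝ² and let ‖·‖₁ denote the ℓ¹ norm ‖(x₁, x₂)‖₁ = |x₁| + |x₂| on ℝ². Then for every x = (x₁, x₂) ∈ ℝ²: (i) dist_{‖·‖₁}(x, C) = |x₁ − x₂|; (ii) a point z ∈ C is a best ‖·‖₁-approximation of x if and only if z lies on the segment {s(x₁, x₁) + (1 − s)(x₂, x₂) : s ∈ [0, 1]}. Consequently, the function x ↦ dist_{‖·‖₁}(x, C) is differentiable at every x ∈ ℝ² \ C, yet no x ∈ ℝ² \ C has a unique best ‖·‖₁-approximation in C. -/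
open Set

local notation "ν₁" => fun z : Fin 2 → ℝ => |z 0| + |z 1|

-- `{z | …}` written as `Set.ofPred`, since set-builder syntax cannot appear in a `notation`.
local notation "Δ₂" => Set.ofPred fun z : Fin 2 → ℝ => ∃ t : ℝ, z = fun _ => t

lemma exists_eq_const_iff_fin_two {α : Type*} (x : Fin 2 → α) :
    (∃ t : α, x = fun _ => t) ↔ x 0 = x 1 :=
  ⟨by rintro ⟨t, rfl⟩; rfl, fun h => ⟨x 0, funext (Fin.forall_fin_two.2 ⟨rfl, h.symm⟩)⟩⟩

lemma abs_sub_add_abs_sub_eq_iff_mem_segment {a b t : ℝ} :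
    |a - t| + |b - t| = |a - b| ↔ t ∈ segment ℝ a b := by
  rw [mem_segment_iff_wbtw, ← dist_add_dist_eq_iff, Real.dist_eq, Real.dist_eq, Real.dist_eq,
    abs_sub_comm t]

lemma mem_segment_iff_exists_mem_Icc {a b t : ℝ} :
    t ∈ segment ℝ a b ↔ ∃ s ∈ Icc (0 : ℝ) 1, t = s * a + (1 - s) * b := by
  rw [segment_symm, segment_eq_image]
  simp only [mem_image, smul_eq_mul, add_comm, eq_comm (b := t)]

lemma const_eq_smul_const_add_smul_const_iff {ι : Type*} [Nonempty ι] {t a b s : ℝ} :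
    ((fun _ => t : ι → ℝ) = s • (fun _ => a) + (1 - s) • (fun _ => b)) ↔
      t = s * a + (1 - s) * b := by
  simp only [funext_iff, Pi.add_apply, Pi.smul_apply, smul_eq_mul, forall_const]

theorem distNu_l1_diagonal (x : Fin 2 → ℝ) : distNu ν₁ Δ₂ x = |x 0 - x 1| := by
  refine IsLeast.csInf_eq ⟨⟨fun _ => x 1, ⟨x 1, rfl⟩, by simp⟩, ?_⟩
  rintro _ ⟨_, ⟨t, rfl⟩, rfl⟩
  calc |x 0 - x 1| ≤ |x 0 - t| + |t - x 1| := abs_sub_le _ _ _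
    _ = |x 0 - t| + |x 1 - t| := by rw [abs_sub_comm t]

theorem l1_sub_const_eq_distNu_diagonal_iff (x : Fin 2 → ℝ) (t : ℝ) :
    ν₁ (x - fun _ => t) = distNu ν₁ Δ₂ x ↔ t ∈ segment ℝ (x 0) (x 1) := by
  rw [distNu_l1_diagonal, ← abs_sub_add_abs_sub_eq_iff_mem_segment]
  rfl

theorem differentiableAt_distNu_l1_diagonal {x : Fin 2 → ℝ} (hx : x ∉ Δ₂) :
    DifferentiableAt ℝ (distNu ν₁ Δ₂) x := by
  have hne : x 0 - x 1 ≠ 0 := sub_ne_zero.2 fun h => hx ((exists_eq_const_iff_fin_two x).2 h)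
  rw [funext distNu_l1_diagonal]
  exact (differentiableAt_abs hne).comp (f := fun y : Fin 2 → ℝ => y 0 - y 1) x (by fun_prop)

/-- Let `C = {(t,t) : t ∈ ℝ} ⊆ ℝ²` and `ν = ‖·‖₁`.  Then (i) `distNu ν C x = |x₀ − x₁|`;
(ii) `z ∈ C` is a best `ν`-approximation of `x` iff `z` lies on the segment from
`(x₀,x₀)` to `(x₁,x₁)`.  Consequently `distNu ν C` is differentiable at every
`x ∈ ℝ² \ C`, yet no `x ∈ ℝ² \ C` has a unique best `ν`-approximation in `C`. -/
theorem stmt16 (C : Set (Fin 2 → ℝ))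
    (hC : C = {z | ∃ t : ℝ, z = fun _ => t})
    (ν : (Fin 2 → ℝ) → ℝ)
    (hν : ν = fun z => |z 0| + |z 1|) :
    (∀ x : Fin 2 → ℝ, distNu ν C x = |x 0 - x 1|) ∧
    (∀ x : Fin 2 → ℝ, ∀ z ∈ C,
      (ν (x - z) = distNu ν C x ↔
        ∃ s : ℝ, s ∈ Set.Icc (0 : ℝ) 1 ∧
          z = s • (fun _ => x 0 : Fin 2 → ℝ) + (1 - s) • (fun _ => x 1 : Fin 2 → ℝ))) ∧
    (∀ x : Fin 2 → ℝ, x ∉ C → DifferentiableAt ℝ (distNu ν C) x) ∧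
    (∀ x : Fin 2 → ℝ, x ∉ C → ¬ ∃! z, z ∈ C ∧ ν (x - z) = distNu ν C x) := by
  subst hC hν
  refine ⟨distNu_l1_diagonal, ?_, fun x => differentiableAt_distNu_l1_diagonal, ?_⟩
  · rintro x _ ⟨t, rfl⟩
    rw [l1_sub_const_eq_distNu_diagonal_iff, mem_segment_iff_exists_mem_Icc]
    simp only [const_eq_smul_const_add_smul_const_iff]
  · rintro x hx ⟨z, -, huniq⟩
    have h₀ : (fun _ => x 0) = z := huniq _
      ⟨⟨x 0, rfl⟩, (l1_sub_const_eq_distNu_diagonal_iff x _).2 (left_mem_segment ℝ _ _)⟩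
    have h₁ : (fun _ => x 1) = z := huniq _
      ⟨⟨x 1, rfl⟩, (l1_sub_const_eq_distNu_diagonal_iff x _).2 (right_mem_segment ℝ _ _)⟩
    exact hx ((exists_eq_const_iff_fin_two x).2 (congrFun (h₀.trans h₁.symm) 0))
end

section
/- Let ν be a norm on ℝⁿ that is (Fréchet) differentiable at every x ≠ 0. Then for every w ∈ ℝⁿ with w ≠ 0 there exist a real number a > 0 and a point x ∈ ℝⁿ with ν(x) = 1 such that the gradient of ν at x equals a·w; that is, every nonzero vector is a positive multiple of the gradient of ν at some unit vector of ν. -/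
open scoped RealInnerProductSpace

/-! For `w ≠ 0`, maximize the 0-homogeneous ratio `⟪w, y⟫ / ν y` over the Euclidean unit sphere
and rescale the maximizer `x` to `ν x = 1`. Then `⟪w, ·⟫ ≤ ⟪w, x⟫ • ν` everywhere with equality
at `x`, so `⟪w, x⟫ • ν - ⟪w, ·⟫` is minimal at `x`, and its vanishing derivative there gives
`⟪w, x⟫ • ∇ν(x) = w`. -/

section

variable {E : Type*}

theorem pos_of_ne_zero_of_norm_axioms [AddCommGroup E] [Module ℝ E] {ν : E → ℝ}
    (hν_eq : ∀ x, ν x = 0 ↔ x = 0) (hν_smul : ∀ (c : ℝ) (x : E), ν (c • x) = |c| * ν x)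
    (hν_add : ∀ x y, ν (x + y) ≤ ν x + ν y) {x : E} (hx : x ≠ 0) : 0 < ν x := by
  have hnonneg : 0 ≤ ν x := by
    have h := hν_add x ((-1 : ℝ) • x)
    rw [hν_smul, abs_neg, abs_one, one_mul, neg_one_smul, add_neg_cancel,
      (hν_eq 0).2 rfl] at h
    linarith
  exact hnonneg.lt_of_ne fun h => hx ((hν_eq x).1 h.symm)

variable [NormedAddCommGroup E] [InnerProductSpace ℝ E]

theorem exists_eq_one_forall_inner_le [FiniteDimensional ℝ E] [Nontrivial E] {ν : E → ℝ}
    (hν_smul : ∀ (c : ℝ) (x : E), ν (c • x) = |c| * ν x) (hpos : ∀ x, x ≠ 0 → 0 < ν x)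
    (hcont : ∀ x, x ≠ 0 → ContinuousAt ν x) (w : E) :
    ∃ x, ν x = 1 ∧ ∀ y, ⟪w, y⟫ ≤ ⟪w, x⟫ * ν y := by
  set φ : E → ℝ := fun y => ⟪w, y⟫ / ν y
  have hφ_smul : ∀ {c : ℝ} (y : E), 0 < c → φ (c • y) = φ y := fun y hc => by
    simp only [φ, inner_smul_right, hν_smul, abs_of_pos hc, mul_div_mul_left _ _ hc.ne']
  have hsphere : ∀ y ∈ Metric.sphere (0 : E) 1, y ≠ 0 := fun y hy =>
    ne_zero_of_mem_unit_sphere ⟨y, hy⟩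
  have hφ_cont : ContinuousOn φ (Metric.sphere 0 1) :=
    ContinuousOn.div (continuous_const.inner continuous_id).continuousOn
      (fun y hy => (hcont y (hsphere y hy)).continuousWithinAt)
      (fun y hy => (hpos y (hsphere y hy)).ne')
  obtain ⟨x₁, hx₁, hmax⟩ := (isCompact_sphere (0 : E) 1).exists_isMaxOn
    (NormedSpace.sphere_nonempty.2 zero_le_one) hφ_cont
  have hν₁ := hpos x₁ (hsphere x₁ hx₁)
  have hx : ν ((ν x₁)⁻¹ • x₁) = 1 := by
    rw [hν_smul, abs_of_pos (inv_pos.2 hν₁), inv_mul_cancel₀ hν₁.ne']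
  refine ⟨(ν x₁)⁻¹ • x₁, hx, fun y => ?_⟩
  rcases eq_or_ne y 0 with rfl | hy
  · simp [show ν 0 = 0 by simpa using hν_smul 0 0]
  have hy' : 0 < ‖y‖⁻¹ := inv_pos.2 (norm_pos_iff.2 hy)
  have hle : φ y ≤ φ ((ν x₁)⁻¹ • x₁) := by
    rw [← hφ_smul y hy', hφ_smul x₁ (inv_pos.2 hν₁)]
    exact hmax (by simp [norm_smul, hy])
  simpa only [φ, hx, div_one, div_le_iff₀ (hpos y hy)] using hle

theorem smul_gradient_eq_of_forall_le [CompleteSpace E] {ν : E → ℝ} {x w : E} {M : ℝ}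
    (hd : DifferentiableAt ℝ ν x) (hmin : ∀ y, M * ν x - ⟪w, x⟫ ≤ M * ν y - ⟪w, y⟫) :
    M • gradient ν x = w := by
  have hderiv : HasFDerivAt (fun y => M * ν y - ⟪w, y⟫) (M • fderiv ℝ ν x - innerSL ℝ w) x :=
    (hd.hasFDerivAt.const_mul M).sub (innerSL ℝ w).hasFDerivAt
  have hzero : M • fderiv ℝ ν x - innerSL ℝ w = 0 :=
    IsLocalMin.hasFDerivAt_eq_zero (Filter.Eventually.of_forall hmin) hderiv
  refine ext_inner_right ℝ fun y => ?_
  have hy := congrArg (fun L : E →L[ℝ] ℝ => L y) hzero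
  simp only [sub_apply, smul_apply, innerSL_apply_apply, zero_apply, sub_eq_zero, smul_eq_mul] at hy
  rw [real_inner_smul_left, inner_gradient_left, hy]

end

/-- Let `ν` be a norm on `ℝⁿ` that is Fréchet differentiable at every `x ≠ 0`.  Then
every nonzero `w ∈ ℝⁿ` is a positive multiple of the gradient of `ν` at some `ν`-unit
vector: there exist `a > 0` and `x` with `ν(x) = 1` and `∇ν(x) = a • w`. -/
theorem stmt17 {n : ℕ} (ν : EuclideanSpace ℝ (Fin n) → ℝ)
    (hν_eq : ∀ x, ν x = 0 ↔ x = 0)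
    (hν_smul : ∀ (c : ℝ) (x), ν (c • x) = |c| * ν x)
    (hν_add : ∀ x y, ν (x + y) ≤ ν x + ν y)
    (hν_diff : ∀ x : EuclideanSpace ℝ (Fin n), x ≠ 0 → DifferentiableAt ℝ ν x) :
    ∀ w : EuclideanSpace ℝ (Fin n), w ≠ 0 →
      ∃ a : ℝ, 0 < a ∧ ∃ x : EuclideanSpace ℝ (Fin n), ν x = 1 ∧
        gradient ν x = a • w := by
  intro w hw
  have : Nontrivial (EuclideanSpace ℝ (Fin n)) := nontrivial_of_ne w 0 hw
  have hpos : ∀ x, x ≠ 0 → 0 < ν x := fun x hx =>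
    pos_of_ne_zero_of_norm_axioms hν_eq hν_smul hν_add hx
  obtain ⟨x, hx, hle⟩ := exists_eq_one_forall_inner_le hν_smul hpos
    (fun x hx => (hν_diff x hx).continuousAt) w
  have hx₀ : x ≠ 0 := fun h => one_ne_zero (hx.symm.trans ((hν_eq x).2 h))
  have hM : 0 < ⟪w, x⟫ :=
    pos_of_mul_pos_left ((real_inner_self_pos.2 hw).trans_le (hle w)) (hpos w hw).le
  have hgrad : ⟪w, x⟫ • gradient ν x = w :=
    smul_gradient_eq_of_forall_le (hν_diff x hx₀) fun y => by rw [hx]; linarith [hle y]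
  exact ⟨⟪w, x⟫⁻¹, inv_pos.2 hM, x, hx, (eq_inv_smul_iff₀ hM.ne').2 hgrad⟩
end
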